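/- Let S be a del Pezzo surface of degree 4 and p ∈ E₁ a point lying on the line E₁ and on no other line of S. Let C₁, C₂ be distinct irreducible conics through p. Then C₁·C₂ = 1; in particular C₁ and C₂ intersect transversally (normally) at p. -/
import Mathlib


/-- Intersection form on `Pic(S) ≅ ℤ⟨H, E₁, …, E₅⟩`. -/
def ip (v w : Fin 6 → ℤ) : ℤ := v 0 * w 0 - ∑ i : Fin 5, v i.succ * w i.succ

/-- `-K_S = 3H - E₁ - ⋯ - E₅`. -/
def negK : Fin 6 → ℤ := fun k => if k = 0 then 3 else -1

/-- The class `E_i`. -/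
def Ecl (i : Fin 5) : Fin 6 → ℤ := fun k => if k = i.succ then 1 else 0

/-- The class `B_i = H - E_i`. -/
def Bcl (i : Fin 5) : Fin 6 → ℤ := fun k => if k = 0 then 1 else if k = i.succ then -1 else 0

/-- The class `A_i = 2H - Σ_{j ≠ i} E_j`. -/
def Acl (i : Fin 5) : Fin 6 → ℤ := fun k => if k = 0 then 2 else if k = i.succ then 0 else -1

lemma ipBE (i : Fin 5) : ip (Bcl i) (Ecl 0) = if i = 0 then 1 else 0 := by
  fin_cases i <;> decide

lemma ipAE (i : Fin 5) : ip (Acl i) (Ecl 0) = if i = 0 then 0 else 1 := by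
  fin_cases i <;> decide

lemma ipBB (i j : Fin 5) : ip (Bcl i) (Bcl j) = if i = j then 0 else 1 := by
  fin_cases i <;> fin_cases j <;> decide

lemma ipBA (i j : Fin 5) : ip (Bcl i) (Acl j) = if i = j then 2 else 1 := by
  fin_cases i <;> fin_cases j <;> decide

lemma ipAB (i j : Fin 5) : ip (Acl i) (Bcl j) = if i = j then 2 else 1 := by
  fin_cases i <;> fin_cases j <;> decide

lemma ipAA (i j : Fin 5) : ip (Acl i) (Acl j) = if i = j then 0 else 1 := by
  fin_cases i <;> fin_cases j <;> decide

/-- On a degree-4 del Pezzo surface `S`: `cls` is the class map to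
`Pic(S) ≅ ℤ⁶`, `Irr` irreducibility, `mem p C` means `p ∈ C`, and `locInt p C C'` is the local
intersection multiplicity at `p` (for distinct irreducible curves it is ≥ 1 when both pass
through `p` and bounded by the global intersection number, hypothesis `hloc`).  `honly` says
`p` lies on `E₁` and on no other line; `hconic` is the classification of irreducible conics
through `p` (Statement 9).  Conclusion: two distinct irreducible conics `C₁, C₂` through
`p ∈ E₁` satisfy `C₁·C₂ = 1` and intersect transversally at `p`. -/
theorem stmt10 {Div Point : Type*} (cls : Div → Fin 6 → ℤ)
    (Irr : Div → Prop) (mem : Point → Div → Prop)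
    (locInt : Point → Div → Div → ℤ) (p : Point)
    (E1 : Div) (hE1cls : cls E1 = Ecl 0) (hE1irr : Irr E1) (hpE1 : mem p E1)
    (honly : ∀ L : Div, Irr L → ip (cls L) (cls L) = -1 → ip negK (cls L) = 1 →
      mem p L → L = E1)
    (hconic : ∀ C : Div, Irr C → ip negK (cls C) = 2 → mem p C →
      ∃ i : Fin 5, cls C = Bcl i ∨ cls C = Acl i)
    (hloc : ∀ C C' : Div, Irr C → Irr C' → C ≠ C' → mem p C → mem p C' →
      1 ≤ locInt p C C' ∧ locInt p C C' ≤ ip (cls C) (cls C'))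
    (C1 C2 : Div) (h1 : Irr C1) (h2 : Irr C2) (hne : C1 ≠ C2)
    (hd1 : ip negK (cls C1) = 2) (hd2 : ip negK (cls C2) = 2)
    (hm1 : mem p C1) (hm2 : mem p C2) :
    ip (cls C1) (cls C2) = 1 ∧ locInt p C1 C2 = 1 := by
  -- `C1, C2 ≠ E1` since they have different anticanonical degree
  have hC1E1 : C1 ≠ E1 := by
    intro h; rw [h, hE1cls] at hd1; exact absurd hd1 (by decide)
  have hC2E1 : C2 ≠ E1 := by
    intro h; rw [h, hE1cls] at hd2; exact absurd hd2 (by decide)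
  -- both conics meet `E1`, since they pass through `p ∈ E₁`
  have k1 := hloc C1 E1 h1 hE1irr hC1E1 hm1 hpE1
  have k2 := hloc C2 E1 h2 hE1irr hC2E1 hm2 hpE1
  rw [hE1cls] at k1 k2
  have g1 : 1 ≤ ip (cls C1) (Ecl 0) := k1.1.trans k1.2
  have g2 : 1 ≤ ip (cls C2) (Ecl 0) := k2.1.trans k2.2
  obtain ⟨i1, e1⟩ := hconic C1 h1 hd1 hm1
  obtain ⟨i2, e2⟩ := hconic C2 h2 hd2 hm2
  have k := hloc C1 C2 h1 h2 hne hm1 hm2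
  have key : ip (cls C1) (cls C2) = 1 := by
    have hub : 1 ≤ ip (cls C1) (cls C2) := k.1.trans k.2
    rcases e1 with e1 | e1 <;> rcases e2 with e2 | e2 <;>
        rw [e1] at g1 hub ⊢ <;> rw [e2] at g2 hub ⊢
    · -- both of type B: then both are `B₀`, contradiction
      rw [ipBE] at g1
      rw [ipBE] at g2
      have hi1 : i1 = 0 := by by_contra h; simp [h] at g1
      have hi2 : i2 = 0 := by by_contra h; simp [h] at g2
      rw [ipBB, hi1, hi2] at hub; simp at hub
    · -- B and A
      rw [ipBE] at g1
      rw [ipAE] at g2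
      have hi1 : i1 = 0 := by by_contra h; simp [h] at g1
      have hi2 : i2 ≠ 0 := by intro h; simp [h] at g2
      rw [ipBA]; simp [hi1, Ne.symm hi2]
    · -- A and B
      rw [ipAE] at g1
      rw [ipBE] at g2
      have hi1 : i1 ≠ 0 := by intro h; simp [h] at g1
      have hi2 : i2 = 0 := by by_contra h; simp [h] at g2
      rw [ipAB]; simp [hi1, hi2]
    · -- both of type A: then `i1 ≠ i2` since otherwise self-intersection 0
      rw [ipAA] at hub ⊢
      have : i1 ≠ i2 := by intro h; simp [h] at hub
      simp [this]
  refine ⟨key, ?_⟩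
  rw [key] at k
  omega
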